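/- Let S = {0, 1} carry the ternary relation R_S = {(1,1,0), (0,1,1), (0,0,0)} ⊆ S³. For triples p, q, r ∈ S³, say (p, q, r) is componentwise related if (p₁,q₁,r₁) ∈ R_S, (p₂,q₂,r₂) ∈ R_S and (p₃,q₃,r₃) ∈ R_S. Let U_M = {(x,x,y) : x,y ∈ S} ∪ {(y,x,x) : x,y ∈ S} and U_N = {(x,x,y) : x,y ∈ S} ∪ {(x,y,x) : x,y ∈ S} ∪ {(y,x,x) : x,y ∈ S}. Then: (a) the Mal'tsev map f : U_M → S defined by f(x,x,y) = y = f(y,x,x) (explicitly f(a,b,c) = a if b = c, else c) preserves the relation: whenever p, q, r ∈ U_M are componentwise related, (f(p), f(q), f(r)) ∈ R_S; but (b) the majority map g : U_N → S defined by g(x,x,y) = g(x,y,x) = g(y,x,x) = x does not preserve the relation: the triples (1,0,0), (1,1,0), (0,1,0) lie in U_N and are componentwise related, yet (g(1,0,0), g(1,1,0), g(0,1,0)) = (0,1,0) ∉ R_S. (This exhibits an object of Rel₃^op that is a Mal'tsev object but not a majority object, and underlies the counterexample showing that the protoarithmetical category Mal(Rel₃^op) is not a majority category.) -/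
import Mathlib


/-- The ternary relation `R_S = {(1,1,0), (0,1,1), (0,0,0)}` on `S = {0,1}`. -/
def RS : Set (Fin 2 × Fin 2 × Fin 2) :=
  {((1 : Fin 2), (1 : Fin 2), (0 : Fin 2)), ((0 : Fin 2), (1 : Fin 2), (1 : Fin 2)),
    ((0 : Fin 2), (0 : Fin 2), (0 : Fin 2))}

/-- Three triples are componentwise related when each triple of corresponding
components lies in `R_S` (the product relation on `S³`). -/
def ComponentwiseRelated (p q r : Fin 2 × Fin 2 × Fin 2) : Prop :=
  (p.1, q.1, r.1) ∈ RS ∧ (p.2.1, q.2.1, r.2.1) ∈ RS ∧ (p.2.2, q.2.2, r.2.2) ∈ RS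

/-- `U_M = {(x,x,y)} ∪ {(y,x,x)}`. -/
def UM : Set (Fin 2 × Fin 2 × Fin 2) :=
  {p | (∃ x y : Fin 2, p = (x, x, y)) ∨ (∃ x y : Fin 2, p = (y, x, x))}

/-- `U_N = {(x,x,y)} ∪ {(x,y,x)} ∪ {(y,x,x)}`. -/
def UN : Set (Fin 2 × Fin 2 × Fin 2) :=
  {p | (∃ x y : Fin 2, p = (x, x, y)) ∨ (∃ x y : Fin 2, p = (x, y, x)) ∨
    (∃ x y : Fin 2, p = (y, x, x))}

/-- The Mal'tsev map `f(x,x,y) = y = f(y,x,x)` (explicitly, `a` if `b = c`, else `c`). -/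
def maltsevMap (p : Fin 2 × Fin 2 × Fin 2) : Fin 2 :=
  if p.2.1 = p.2.2 then p.1 else p.2.2

/-- The majority map `g(x,x,y) = g(x,y,x) = g(y,x,x) = x`
(explicitly, `a` if `a = b`, else `a` if `a = c`, else `b`). -/
def majorityMap (p : Fin 2 × Fin 2 × Fin 2) : Fin 2 :=
  if p.1 = p.2.1 then p.1 else if p.1 = p.2.2 then p.1 else p.2.1

set_option synthInstance.maxSize 2048 in
set_option synthInstance.maxHeartbeats 2000000 in
set_option maxHeartbeats 2000000 in
/-- On `S = {0,1}` with `R_S = {(1,1,0),(0,1,1),(0,0,0)}`: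
(a) the Mal'tsev map on `U_M` preserves the componentwise relation, but
(b) the majority map on `U_N` does not: the componentwise related triples
`(1,0,0), (1,1,0), (0,1,0)` of `U_N` are sent to `(0,1,0) ∉ R_S`.
Hence `S` is a Mal'tsev object but not a majority object of `Rel₃ᵒᵖ`, and the
protoarithmetical category `Mal(Rel₃ᵒᵖ)` is not a majority category. -/
theorem maltsev_object_not_majority_object :
    (∀ p q r : Fin 2 × Fin 2 × Fin 2, p ∈ UM → q ∈ UM → r ∈ UM →
      ComponentwiseRelated p q r → (maltsevMap p, maltsevMap q, maltsevMap r) ∈ RS) ∧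
    (((1 : Fin 2), (0 : Fin 2), (0 : Fin 2)) ∈ UN ∧
      ((1 : Fin 2), (1 : Fin 2), (0 : Fin 2)) ∈ UN ∧
      ((0 : Fin 2), (1 : Fin 2), (0 : Fin 2)) ∈ UN ∧
      ComponentwiseRelated (1, 0, 0) (1, 1, 0) (0, 1, 0) ∧
      (majorityMap (1, 0, 0), majorityMap (1, 1, 0), majorityMap (0, 1, 0))
        = ((0 : Fin 2), (1 : Fin 2), (0 : Fin 2)) ∧
      ((0 : Fin 2), (1 : Fin 2), (0 : Fin 2)) ∉ RS) := by
  simp only [UM, UN, RS, ComponentwiseRelated, maltsevMap, majorityMap,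
    Set.mem_setOf_eq, Set.mem_insert_iff, Set.mem_singleton_iff]
  decide
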